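/- arXiv:1607.02849 — 2 statements merged into one kernel-verified Lean document; each statement's English description precedes it below -/
import Mathlib

section
/- Let F, E ⊆ ℝ where F is a self-similar set containing a contraction x ↦ α·x + e of F into itself (α ∈ (0,1)), E is the attractor of a homogeneous IFS with ratio β ∈ (0,1) satisfying the strong separation condition, diam(F) > 0, and log α / log β ∉ ℚ. If some affine map g(x) = γ·x + b with γ > 0 satisfies g(F) ⊆ E, then there exists p ∈ ℕ such that for every η ∈ [β^{p+1}·γ, β^p·γ] there is a t ∈ ℝ with η·F + t ⊆ E. -/
open Set

/-- ℕ-forward-orbit density of an irrational rotation, in the form we need. -/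
lemma dense_nat_int (θ : ℝ) (hθ : Irrational θ) (z ε : ℝ) (hε : 0 < ε) :
    ∃ (n : ℕ) (j : ℤ), |(n : ℝ) * θ + j - z| < ε := by
  -- get a small nonzero "step" σ = k θ - j₀ with k a positive integer
  obtain ⟨N, hN⟩ := exists_nat_gt (1 / ε)
  have hNpos : 0 < N := by
    by_contra h
    push_neg at h
    interval_cases N
    · simp at hN
      nlinarith [one_div_pos.mpr hε]
  obtain ⟨j₀, k, hk0, hkN, hsmall⟩ := Real.exists_int_int_abs_mul_sub_le θ hNpos
  set σ : ℝ := (k : ℝ) * θ - j₀ with hσdef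
  have hσne : σ ≠ 0 := by
    intro h
    have : θ = (j₀ : ℝ) / (k : ℝ) := by
      have hk : (k : ℝ) ≠ 0 := by exact_mod_cast hk0.ne'
      field_simp
      linarith
    exact hθ ⟨(j₀ : ℚ) / (k : ℚ), by push_cast [this]; norm_num⟩
  have hσlt : |σ| < ε := by
    have h1 : (1 : ℝ) / (N + 1) < ε := by
      rw [div_lt_iff₀ (by positivity)]
      rw [div_lt_iff₀ hε] at hN
      nlinarith
    exact lt_of_le_of_lt hsmall h1
  set kn : ℕ := k.toNat with hkn
  have hknk : (kn : ℝ) = (k : ℝ) := by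
    rw [hkn]
    exact_mod_cast congrArg Int.cast (Int.toNat_of_nonneg hk0.le)
  rcases hσne.lt_or_gt with hneg | hpos
  · -- σ < 0 : use l with z + l ≤ 0
    set l : ℤ := -⌈|z|⌉ with hl
    have hw : z + (l : ℝ) ≤ 0 := by
      have := Int.le_ceil |z|
      have := abs_nonneg z
      have := le_abs_self z
      push_cast [hl]
      linarith
    set w : ℝ := z + l with hwdef
    have hq : 0 ≤ w / σ := by
      rw [div_nonneg_iff]
      right
      exact ⟨hw, hneg.le⟩
    set K : ℤ := ⌊w / σ⌋ with hK
    have hK0 : 0 ≤ K := Int.floor_nonneg.mpr hq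
    have h1 : (K : ℝ) ≤ w / σ := Int.floor_le _
    have h2 : w / σ < K + 1 := Int.lt_floor_add_one _
    have h1' : w ≤ (K : ℝ) * σ := by
      nlinarith [mul_le_mul_of_nonpos_right h1 hneg.le, div_mul_cancel₀ w hσne]
    have h2' : (K : ℝ) * σ - w < -σ := by
      nlinarith [mul_lt_mul_of_neg_right h2 hneg, div_mul_cancel₀ w hσne]
    refine ⟨K.toNat * kn, K.toNat * (-j₀) - l, ?_⟩
    have hKt : ((K.toNat : ℤ) : ℝ) = (K : ℝ) := by exact_mod_cast congrArg Int.cast (Int.toNat_of_nonneg hK0)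
    have key : ((K.toNat * kn : ℕ) : ℝ) * θ + ((K.toNat * (-j₀) - l : ℤ) : ℝ) - z
        = (K : ℝ) * σ - w := by
      push_cast [hknk]
      push_cast at hKt
      rw [hσdef, hwdef]
      push_cast
      nlinarith [hKt]
    rw [key, abs_sub_lt_iff]
    constructor
    · have : -σ ≤ |σ| := neg_le_abs σ
      linarith
    · linarith
  · -- σ > 0 : use l with z + l ≥ 0
    set l : ℤ := ⌈|z|⌉ with hl
    have hw : 0 ≤ z + (l : ℝ) := by
      have := Int.le_ceil |z|
      have := neg_abs_le z
      push_cast [hl]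
      linarith
    set w : ℝ := z + l with hwdef
    have hq : 0 ≤ w / σ := div_nonneg hw hpos.le
    set K : ℤ := ⌊w / σ⌋ with hK
    have hK0 : 0 ≤ K := Int.floor_nonneg.mpr hq
    have h1 : (K : ℝ) * σ ≤ w := by
      rw [← le_div_iff₀ hpos]; exact Int.floor_le _
    have h2 : w - (K : ℝ) * σ < σ := by
      have := Int.lt_floor_add_one (w / σ)
      rw [div_lt_iff₀ hpos] at this
      nlinarith
    refine ⟨K.toNat * kn, K.toNat * (-j₀) - l, ?_⟩
    have hKt : ((K.toNat : ℤ) : ℝ) = (K : ℝ) := by exact_mod_cast congrArg Int.cast (Int.toNat_of_nonneg hK0)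
    have key : ((K.toNat * kn : ℕ) : ℝ) * θ + ((K.toNat * (-j₀) - l : ℤ) : ℝ) - z
        = (K : ℝ) * σ - w := by
      push_cast [hknk]
      push_cast at hKt
      rw [hσdef, hwdef]
      push_cast
      nlinarith [hKt]
    rw [key, abs_sub_lt_iff]
    constructor
    · have : σ ≤ |σ| := le_abs_self σ
      linarith
    · have : σ ≤ |σ| := le_abs_self σ
      linarith


/-- If `F` is a nonempty compact set with positive diameter mapped into itself
by `x ↦ α·x + e` (`α ∈ (0,1)`), `E` is the attractor of a homogeneous IFS with ratio
`β ∈ (0,1)` satisfying the SSC, `log α / log β` is irrational, and `g(x) = γ·x + b`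
(`γ > 0`) satisfies `g(F) ⊆ E`, then there is `p ∈ ℕ` such that every
`η ∈ [β^(p+1)·γ, β^p·γ]` admits `t ∈ ℝ` with `η·F + t ⊆ E`. -/
theorem stmt5 (F : Set ℝ) (hFc : IsCompact F) (hFne : F.Nonempty)
    (hFd : 0 < Metric.diam F)
    (α e : ℝ) (hα : 0 < α ∧ α < 1) (hφ : (fun x => α * x + e) '' F ⊆ F)
    {m : ℕ} (hm : 2 ≤ m) (ψ : Fin m → ℝ → ℝ) (β : ℝ) (tE : Fin m → ℝ)
    (hβ : 0 < β ∧ β < 1) (hψ : ∀ j x, ψ j x = β * x + tE j)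
    (E : Set ℝ) (hEc : IsCompact E) (hEne : E.Nonempty)
    (hE : E = ⋃ j, ψ j '' E)
    (hSSC : Pairwise fun i j => Disjoint (ψ i '' E) (ψ j '' E))
    (hirr : Irrational (Real.log α / Real.log β))
    (γ b : ℝ) (hγ : 0 < γ) (hg : (fun x => γ * x + b) '' F ⊆ E) :
    ∃ p : ℕ, ∀ η ∈ Set.Icc (β ^ (p + 1) * γ) (β ^ p * γ),
      ∃ t : ℝ, (fun x => η * x + t) '' F ⊆ E := by
  obtain ⟨hα0, hα1⟩ := hα
  obtain ⟨hβ0, hβ1⟩ := hβ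
  obtain ⟨x0, hx0⟩ := hFne
  set D := Metric.diam F with hDdef
  set Acl : Set ℝ := {η : ℝ | ∃ t : ℝ, (fun x => η * x + t) '' F ⊆ E} with hAcldef
  have hsubE : ∀ j : Fin m, ψ j '' E ⊆ E := by
    intro j y hy
    rw [hE]
    exact mem_iUnion.mpr ⟨j, hy⟩
  -- multiplicative closure properties of Acl
  have hαmul : ∀ η ∈ Acl, α * η ∈ Acl := by
    rintro η ⟨t, ht⟩
    refine ⟨η * e + t, ?_⟩
    rintro _ ⟨x, hx, rfl⟩
    have h1 : α * x + e ∈ F := hφ ⟨x, hx, rfl⟩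
    have h2 : η * (α * x + e) + t ∈ E := ht ⟨_, h1, rfl⟩
    show α * η * x + (η * e + t) ∈ E
    rw [show α * η * x + (η * e + t) = η * (α * x + e) + t from by ring]
    exact h2
  have hβmul : ∀ η ∈ Acl, β * η ∈ Acl := by
    rintro η ⟨t, ht⟩
    have j0 : Fin m := ⟨0, by omega⟩
    refine ⟨β * t + tE j0, ?_⟩
    rintro _ ⟨x, hx, rfl⟩
    have h2 : η * x + t ∈ E := ht ⟨x, hx, rfl⟩
    have h4 := hsubE j0 ⟨_, h2, rfl⟩
    rw [hψ] at h4
    show β * η * x + (β * t + tE j0) ∈ E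
    rw [show β * η * x + (β * t + tE j0) = β * (η * x + t) + tE j0 from by ring]
    exact h4
  have hγA : γ ∈ Acl := ⟨b, hg⟩
  -- Acl is closed
  have hclosed : IsClosed Acl := by
    rw [← isSeqClosed_iff_isClosed]
    intro u η hu hlim
    choose t ht using hu
    have hv : ∀ n, u n * x0 + t n ∈ E := fun n => ht n ⟨x0, hx0, rfl⟩
    obtain ⟨aL, haE, φ', hφ'mono, hφ'lim⟩ := hEc.tendsto_subseq hv
    have hul : Filter.Tendsto (fun k => u (φ' k)) Filter.atTop (nhds η) :=
      hlim.comp hφ'mono.tendsto_atTop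
    have htl : Filter.Tendsto (fun k => t (φ' k)) Filter.atTop (nhds (aL - η * x0)) := by
      have heq : (fun k => t (φ' k))
          = fun k => (u (φ' k) * x0 + t (φ' k)) - u (φ' k) * x0 := by
        funext k; ring
      rw [heq]
      exact hφ'lim.sub (hul.mul_const x0)
    refine ⟨aL - η * x0, ?_⟩
    rintro _ ⟨x, hx, rfl⟩
    show η * x + (aL - η * x0) ∈ E
    apply hEc.isClosed.mem_of_tendsto ((hul.mul_const x).add htl)
    exact Filter.Eventually.of_forall fun k => ht (φ' k) ⟨x, hx, rfl⟩
  -- the separation gap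
  have hψcomp : ∀ j : Fin m, IsCompact (ψ j '' E) := by
    intro j
    have heq : ψ j '' E = (fun x => β * x + tE j) '' E := by
      apply image_congr; intro x _; rw [hψ]
    rw [heq]
    exact hEc.image ((continuous_const.mul continuous_id).add continuous_const)
  have hψne : ∀ j : Fin m, (ψ j '' E).Nonempty := fun j => hEne.image _
  have hpair : ∀ i j : Fin m, ∃ d : ℝ, 0 < d ∧
      (i ≠ j → ∀ x ∈ ψ i '' E, ∀ y ∈ ψ j '' E, d ≤ dist x y) := by
    intro i j
    by_cases hij : i = j
    · exact ⟨1, one_pos, fun h => absurd hij h⟩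
    · have hdisj := hSSC hij
      obtain ⟨x, hxmem, hxmin⟩ := (hψcomp i).exists_isMinOn (hψne i)
        (Metric.continuous_infDist_pt (ψ j '' E)).continuousOn
      have hxpos : 0 < Metric.infDist x (ψ j '' E) := by
        rw [← (hψcomp j).isClosed.notMem_iff_infDist_pos (hψne j)]
        exact fun hmem => (hdisj.ne_of_mem hxmem hmem) rfl
      refine ⟨Metric.infDist x (ψ j '' E), hxpos, fun _ x' hx' y hy => ?_⟩
      calc Metric.infDist x (ψ j '' E) ≤ Metric.infDist x' (ψ j '' E) := hxmin hx'
        _ ≤ dist x' y := Metric.infDist_le_dist_of_mem hy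
  choose dgap hdgap using hpair
  have hFinNe : Nonempty (Fin m) := ⟨⟨0, by omega⟩⟩
  set δ : ℝ := Finset.univ.inf' Finset.univ_nonempty
      (fun p : Fin m × Fin m => dgap p.1 p.2) with hδdef
  have hδpos : 0 < δ := by
    rw [hδdef, Finset.lt_inf'_iff]
    exact fun p _ => (hdgap p.1 p.2).1
  have hδle : ∀ i j : Fin m, i ≠ j → ∀ x ∈ ψ i '' E, ∀ y ∈ ψ j '' E, δ ≤ dist x y := by
    intro i j hij x hx y hy
    calc δ ≤ dgap i j := Finset.inf'_le _ (Finset.mem_univ (i, j))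
      _ ≤ dist x y := (hdgap i j).2 hij x hx y hy
  -- going-up property
  have hup : ∀ η ∈ Acl, 0 < η → η * D < δ → η / β ∈ Acl := by
    rintro η ⟨t, ht⟩ hη hsmall
    have h0 : η * x0 + t ∈ E := ht ⟨x0, hx0, rfl⟩
    rw [hE] at h0
    obtain ⟨j, hj⟩ := mem_iUnion.mp h0
    refine ⟨(t - tE j) / β, ?_⟩
    rintro _ ⟨x, hx, rfl⟩
    show η / β * x + (t - tE j) / β ∈ E
    have h1 : η * x + t ∈ E := ht ⟨x, hx, rfl⟩
    rw [hE] at h1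
    obtain ⟨i, hi⟩ := mem_iUnion.mp h1
    have hij : i = j := by
      by_contra hij
      have hd := hδle i j hij _ hi _ hj
      have hdd : dist (η * x + t) (η * x0 + t) ≤ η * D := by
        rw [Real.dist_eq,
          show η * x + t - (η * x0 + t) = η * (x - x0) by ring, abs_mul, abs_of_pos hη]
        have h5 : |x - x0| ≤ D := by
          rw [← Real.dist_eq]
          exact Metric.dist_le_diam_of_mem hFc.isBounded hx hx0
        nlinarith
      linarith
    subst hij
    obtain ⟨y, hyE, hyeq⟩ := hi
    rw [hψ] at hyeq
    have hyy : η / β * x + (t - tE i) / β = y := by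
      field_simp
      linarith [hyeq]
    rw [hyy]; exact hyE
  -- logarithmic picture
  set aL := Real.log α with haL
  set cL := Real.log β with hcL
  have hcneg : cL < 0 := Real.log_neg hβ0 hβ1
  set s := Real.log (δ / D) with hsdef
  set B : Set ℝ := Real.exp ⁻¹' Acl with hBdef
  have hBclosed : IsClosed B := hclosed.preimage Real.continuous_exp
  have hBa : ∀ u ∈ B, u + aL ∈ B := by
    intro u hu
    show Real.exp (u + aL) ∈ Acl
    rw [Real.exp_add, Real.exp_log hα0, mul_comm]
    exact hαmul _ hu
  have hBc : ∀ u ∈ B, u + cL ∈ B := by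
    intro u hu
    show Real.exp (u + cL) ∈ Acl
    rw [Real.exp_add, Real.exp_log hβ0, mul_comm]
    exact hβmul _ hu
  have hBup : ∀ u ∈ B, u < s → u - cL ∈ B := by
    intro u hu hus
    have hsmall : Real.exp u * D < δ := by
      have h1 : Real.exp u < δ / D := by
        have h2 := Real.exp_lt_exp.mpr hus
        rwa [show Real.exp s = δ / D from Real.exp_log (div_pos hδpos hFd)] at h2
      calc Real.exp u * D < δ / D * D := by nlinarith [hFd]
        _ = δ := by field_simp
    have h2 := hup _ hu (Real.exp_pos u) hsmall
    show Real.exp (u - cL) ∈ Acl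
    rwa [Real.exp_sub, Real.exp_log hβ0]
  have hg0 : Real.log γ ∈ B := by
    show Real.exp (Real.log γ) ∈ Acl
    rwa [Real.exp_log hγ]
  -- iterated steps
  have hna : ∀ (n : ℕ) (u : ℝ), u ∈ B → u + n * aL ∈ B := by
    intro n
    induction n with
    | zero => intro u hu; simpa using hu
    | succ n ih =>
      intro u hu
      have h := hBa _ (ih u hu)
      convert h using 1
      push_cast; ring
  have hnc : ∀ (k : ℕ) (u : ℝ), u ∈ B → u + k * cL ∈ B := by
    intro k
    induction k with
    | zero => intro u hu; simpa using hu
    | succ k ih =>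
      intro u hu
      have h := hBc _ (ih u hu)
      convert h using 1
      push_cast; ring
  have hclimb : ∀ (j : ℕ) (u : ℝ), u ∈ B → u - j * cL ≤ s → u - j * cL ∈ B := by
    intro j
    induction j with
    | zero => intro u hu _; simpa using hu
    | succ j ih =>
      intro u hu hle
      have hjs : u - j * cL < s := by push_cast at hle ⊢; linarith
      have h2 := hBup _ (ih u hu hjs.le) hjs
      convert h2 using 1
      push_cast; ring
  have hstep : ∀ (n : ℕ) (jj : ℤ) (u : ℝ), u ∈ B →
      u + n * aL + jj * cL ≤ s → u + n * aL + jj * cL ∈ B := by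
    intro n jj u hu hle
    rcases le_or_gt 0 jj with hjj | hjj
    · lift jj to ℕ using hjj
      have h := hnc jj _ (hna n u hu)
      convert h using 1 <;> (push_cast; ring)
    · have hJc : (((-jj).toNat : ℕ) : ℝ) = -(jj : ℝ) := by
        have h0 : (((-jj).toNat : ℕ) : ℤ) = -jj := Int.toNat_of_nonneg (by omega)
        exact_mod_cast h0
      have heq : u + ↑n * aL + ↑jj * cL = (u + ↑n * aL) - ((-jj).toNat : ℕ) * cL := by
        rw [hJc]; ring
      rw [heq] at hle ⊢
      exact hclimb _ _ (hna n u hu) hle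
  -- density: everything below s is in B
  have hmain : ∀ x : ℝ, x ≤ s → x ∈ B := by
    intro x hx
    have hxc : x ∈ closure B := by
      rw [Metric.mem_closure_iff]
      intro ε hε
      set z : ℝ := ((x - Real.log γ) - ε / 2) / cL with hz
      have hccpos : (0:ℝ) < -cL := by linarith
      have hcc : (-cL) ≠ 0 := ne_of_gt hccpos
      have hc0 : cL ≠ 0 := ne_of_lt hcneg
      obtain ⟨n, j, hnj⟩ := dense_nat_int (aL / cL) hirr z (ε / (2 * (-cL)))
        (by positivity)
      set bb : ℝ := Real.log γ + n * aL + j * cL with hbb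
      have hkey : |bb - (x - ε / 2)| < ε / 2 := by
        have h1 : |(↑n * (aL / cL) + ↑j - z) * cL| < ε / (2 * (-cL)) * (-cL) := by
          rw [abs_mul, abs_of_neg hcneg]
          exact mul_lt_mul_of_pos_right hnj (by linarith)
        have h2 : (↑n * (aL / cL) + ↑j - z) * cL = bb - (x - ε / 2) := by
          have e1 : aL / cL * cL = aL := div_mul_cancel₀ _ hc0
          have e2 : z * cL = x - Real.log γ - ε / 2 := by
            rw [hz]; exact div_mul_cancel₀ _ hc0
          calc (↑n * (aL / cL) + ↑j - z) * cL
              = ↑n * (aL / cL * cL) + ↑j * cL - z * cL := by ring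
            _ = bb - (x - ε / 2) := by rw [e1, e2, hbb]; ring
        have h3 : ε / (2 * (-cL)) * (-cL) = ε / 2 := by
          rw [← div_div, div_mul_cancel₀ _ hcc]
        rwa [h2, h3] at h1
      have habs := abs_lt.mp hkey
      refine ⟨bb, ?_, ?_⟩
      · rw [hbb]
        exact hstep n j _ hg0 (by rw [← hbb]; linarith [habs.1, habs.2, hx])
      · rw [Real.dist_eq, abs_lt]
        constructor <;> linarith [habs.1, habs.2, hε]
    exact hBclosed.closure_subset hxc
  -- conclusion
  obtain ⟨p, hp⟩ := exists_nat_ge ((Real.log γ - s) / (-cL))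
  refine ⟨p, ?_⟩
  intro η hη
  have hηpos : 0 < η := lt_of_lt_of_le (by positivity) hη.1
  have hps : Real.log γ + p * cL ≤ s := by
    rw [div_le_iff₀ (by linarith)] at hp
    linarith
  have hub : Real.log η ≤ s := by
    have h1 : Real.log η ≤ Real.log (β ^ p * γ) :=
      Real.log_le_log hηpos hη.2
    have h2 : Real.log (β ^ p * γ) = p * cL + Real.log γ := by
      rw [Real.log_mul (by positivity) (ne_of_gt hγ), Real.log_pow]
    linarith
  have hmem : Real.exp (Real.log η) ∈ Acl := hmain _ hub
  rwa [Real.exp_log hηpos] at hmem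
end

section
/- Under the hypotheses of the previous statement (F self-similar with a ratio-α map, E homogeneous self-similar with ratio β having the SSC, log α/log β irrational, and an affine embedding g(x) = γ·x + b of F into E with γ > 0), the set Σ = closure of { (η, t) ∈ (0,∞) × ℝ : η·F + t ⊆ E, η ∈ [β^{p+1}γ, β^p γ] } is a compact subset of ℝ² whose projection to the first coordinate contains the interval [β^{p+1}γ, β^p γ]; in particular dim_H Σ ≥ 1. -/
open Set
open scoped ENNReal NNReal

lemma denseNk {a b : ℝ} (hb : b < 0) (hirr : Irrational (a / b)) (y ε : ℝ) (hε : 0 < ε) :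
    ∃ (mm : ℕ) (k : ℤ), |(mm : ℝ) * a + (k : ℝ) * b - y| < ε := by
  have hbne : b ≠ 0 := ne_of_lt hb
  -- the subgroup generated by a, b is dense
  have hdense : Dense ((AddSubgroup.closure ({a, b} : Set ℝ) : AddSubgroup ℝ) : Set ℝ) := by
    rcases AddSubgroup.dense_or_cyclic (AddSubgroup.closure ({a, b} : Set ℝ)) with h | ⟨g, hg⟩
    · exact h
    · exfalso
      have ha' : a ∈ AddSubgroup.closure ({a, b} : Set ℝ) :=
        AddSubgroup.subset_closure (by simp)
      have hb' : b ∈ AddSubgroup.closure ({a, b} : Set ℝ) :=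
        AddSubgroup.subset_closure (by simp)
      rw [hg, AddSubgroup.mem_closure_singleton] at ha' hb'
      obtain ⟨n, hn⟩ := ha'
      obtain ⟨n', hn'⟩ := hb'
      have hg0 : g ≠ 0 := by
        rintro rfl; simp at hn'; exact hbne hn'.symm
      have hn'0 : (n' : ℝ) ≠ 0 := by
        rintro h; rw [← hn'] at hbne; simp [zsmul_eq_mul, h] at hbne
      apply hirr
      refine ⟨(n : ℚ) / (n' : ℚ), ?_⟩
      rw [← hn, ← hn']
      push_cast [zsmul_eq_mul]
      rw [mul_comm (n:ℝ) g, mul_comm (n':ℝ) g, div_eq_div_iff]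
      · ring
      · exact hn'0
      · exact mul_ne_zero hg0 hn'0
  -- find a small nonzero element with nonnegative a-coefficient
  set ε' : ℝ := min ε (-b) with hε'
  have hε'0 : 0 < ε' := lt_min hε (by linarith)
  obtain ⟨s, hsS, hs⟩ := hdense.exists_mem_open isOpen_Ioo
    (Set.nonempty_Ioo.2 (show (0:ℝ) < ε' from hε'0))
  rw [SetLike.mem_coe, AddSubgroup.mem_closure_pair] at hsS
  obtain ⟨mi, ni, hmn⟩ := hsS
  simp only [zsmul_eq_mul] at hmn
  have hs0 : 0 < s := hs.1
  have hsε : s < ε' := hs.2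
  have hmi0 : mi ≠ 0 := by
    rintro rfl
    simp only [Int.cast_zero, zero_mul, zero_add] at hmn
    rcases lt_trichotomy ni 0 with h | h | h
    · have : (1:ℝ) ≤ (-ni : ℤ) := by exact_mod_cast (by omega : (1:ℤ) ≤ -ni)
      push_cast at this
      nlinarith [hs.2, min_le_right ε (-b)]
    · subst h; simp at hmn; linarith [hmn, hs0]
    · have : (1:ℝ) ≤ (ni : ℤ) := by exact_mod_cast h
      push_cast at this
      nlinarith [hs0]
  -- δ = m0 * a + k0 * b with m0 : ℕ, m0 ≥ 1, 0 < |δ| < ε'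
  obtain ⟨m0, k0, δ, hδeq, hδne, hδlt⟩ :
      ∃ (m0 : ℕ) (k0 : ℤ) (δ : ℝ), (m0 : ℝ) * a + (k0 : ℝ) * b = δ ∧ δ ≠ 0 ∧ |δ| < ε' := by
    rcases lt_or_gt_of_ne hmi0 with h | h
    · refine ⟨(-mi).toNat, -ni, -s, ?_, by linarith, by rw [abs_neg, abs_of_pos hs0]; exact hsε⟩
      have : ((-mi).toNat : ℝ) = (-mi : ℤ) := by exact_mod_cast Int.toNat_of_nonneg (by omega)
      rw [this]; push_cast; linarith [hmn]
    · refine ⟨mi.toNat, ni, s, ?_, by linarith, by rw [abs_of_pos hs0]; exact hsε⟩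
      have : (mi.toNat : ℝ) = (mi : ℤ) := by exact_mod_cast Int.toNat_of_nonneg (by omega)
      rw [this]; exact hmn
  have hδabs : 0 < |δ| := abs_pos.2 hδne
  -- choose a shift j' making Y' := y - j'*b have the same sign as δ
  obtain ⟨j', hY'⟩ : ∃ j' : ℤ, 0 < (y - (j' : ℝ) * b) / δ := by
    rcases lt_or_gt_of_ne hδne with hneg | hpos
    · -- δ < 0 : want Y' < 0, i.e. y < j'*b, take j' = -j with j*(-b) > y
      obtain ⟨j, hj⟩ := exists_nat_gt (y / (-b))
      refine ⟨-(j : ℤ), div_pos_of_neg_of_neg ?_ hneg⟩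
      have : y < (j : ℝ) * (-b) := by
        rw [div_lt_iff₀ (by linarith : (0:ℝ) < -b)] at hj; linarith
      push_cast; nlinarith
    · -- δ > 0 : want Y' > 0
      obtain ⟨j, hj⟩ := exists_nat_gt (-y / (-b))
      refine ⟨(j : ℤ), div_pos ?_ hpos⟩
      have : -y < (j : ℝ) * (-b) := by
        rw [div_lt_iff₀ (by linarith : (0:ℝ) < -b)] at hj; linarith
      push_cast; nlinarith
  set Y' : ℝ := y - (j' : ℝ) * b with hY'def
  set n : ℤ := ⌈Y' / δ⌉ with hn
  have hn1 : 1 ≤ n := by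
    have := Int.ceil_pos.mpr hY'
    omega
  have hfr1 : Y' / δ ≤ (n : ℝ) := Int.le_ceil _
  have hfr2 : (n : ℝ) < Y' / δ + 1 := by
    have := Int.ceil_lt_add_one (Y' / δ); linarith
  have hclose : |(n : ℝ) * δ - Y'| < |δ| := by
    have h1 : (n : ℝ) * δ - Y' = δ * ((n : ℝ) - Y' / δ) := by
      field_simp
    rw [h1, abs_mul]
    have h2 : |(n : ℝ) - Y' / δ| < 1 := by
      rw [abs_lt]; constructor <;> linarith
    nlinarith [hδabs]
  refine ⟨(n.toNat * m0 : ℕ), n * k0 + j', ?_⟩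
  have hnt : ((n.toNat : ℕ) : ℝ) = (n : ℝ) := by
    have := Int.toNat_of_nonneg (by omega : (0:ℤ) ≤ n)
    exact_mod_cast congrArg (fun z : ℤ => (z : ℝ)) this
  have hval : ((n.toNat * m0 : ℕ) : ℝ) * a + ((n * k0 + j' : ℤ) : ℝ) * b
      = (n : ℝ) * δ + (j' : ℝ) * b := by
    push_cast
    rw [hnt]
    nlinarith [hδeq]
  rw [hval]
  have : (n : ℝ) * δ + (j' : ℝ) * b - y = (n : ℝ) * δ - Y' := by
    rw [hY'def]; ring
  rw [this]
  calc |(n : ℝ) * δ - Y'| < |δ| := hclose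
    _ < ε' := hδlt
    _ ≤ ε := min_le_left _ _




/-- Under the hypotheses of Statement 5, the closure `Σ` of the set of pairs
`(η, t)` with `η ∈ [β^(p+1)γ, β^p γ]` and `η·F + t ⊆ E` is a compact subset of `ℝ²` whose
projection to the first coordinate contains `[β^(p+1)γ, β^p γ]`; in particular
`dim_H Σ ≥ 1`. -/
theorem stmt6 (F : Set ℝ) (hFc : IsCompact F) (hFne : F.Nonempty)
    (hFd : 0 < Metric.diam F)
    (α e : ℝ) (hα : 0 < α ∧ α < 1) (hφ : (fun x => α * x + e) '' F ⊆ F)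
    {m : ℕ} (hm : 2 ≤ m) (ψ : Fin m → ℝ → ℝ) (β : ℝ) (tE : Fin m → ℝ)
    (hβ : 0 < β ∧ β < 1) (hψ : ∀ j x, ψ j x = β * x + tE j)
    (E : Set ℝ) (hEc : IsCompact E) (hEne : E.Nonempty)
    (hE : E = ⋃ j, ψ j '' E)
    (hSSC : Pairwise fun i j => Disjoint (ψ i '' E) (ψ j '' E))
    (hirr : Irrational (Real.log α / Real.log β))
    (γ b : ℝ) (hγ : 0 < γ) (hg : (fun x => γ * x + b) '' F ⊆ E) :
    ∃ p : ℕ,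
      IsCompact (closure {q : ℝ × ℝ | 0 < q.1 ∧
        q.1 ∈ Set.Icc (β ^ (p + 1) * γ) (β ^ p * γ) ∧
        (fun x => q.1 * x + q.2) '' F ⊆ E}) ∧
      Set.Icc (β ^ (p + 1) * γ) (β ^ p * γ) ⊆
        Prod.fst '' closure {q : ℝ × ℝ | 0 < q.1 ∧
          q.1 ∈ Set.Icc (β ^ (p + 1) * γ) (β ^ p * γ) ∧
          (fun x => q.1 * x + q.2) '' F ⊆ E} ∧
      1 ≤ dimH (closure {q : ℝ × ℝ | 0 < q.1 ∧
        q.1 ∈ Set.Icc (β ^ (p + 1) * γ) (β ^ p * γ) ∧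
        (fun x => q.1 * x + q.2) '' F ⊆ E}) := by
  obtain ⟨hα0, hα1⟩ := hα
  obtain ⟨hβ0, hβ1⟩ := hβ
  set Good : ℝ → Prop := fun lam => ∃ t, (fun x => lam * x + t) '' F ⊆ E with hGood
  have hψE : ∀ j, ψ j '' E ⊆ E := by
    intro j
    conv_rhs => rw [hE]
    exact subset_iUnion (fun j => ψ j '' E) j
  have good_alpha : ∀ lam, Good lam → Good (α * lam) := by
    rintro lam ⟨t, ht⟩
    refine ⟨lam * e + t, ?_⟩
    rintro _ ⟨x, hx, rfl⟩
    have hxF : α * x + e ∈ F := hφ ⟨x, hx, rfl⟩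
    have h2 : lam * (α * x + e) + t ∈ E := ht ⟨α * x + e, hxF, rfl⟩
    show α * lam * x + (lam * e + t) ∈ E
    have heq : α * lam * x + (lam * e + t) = lam * (α * x + e) + t := by ring
    rw [heq]; exact h2
  have good_beta : ∀ lam, Good lam → Good (β * lam) := by
    rintro lam ⟨t, ht⟩
    have hj0 : (0 : ℕ) < m := by omega
    set j0 : Fin m := ⟨0, hj0⟩
    refine ⟨β * t + tE j0, ?_⟩
    rintro _ ⟨x, hx, rfl⟩
    have h2 : lam * x + t ∈ E := ht ⟨x, hx, rfl⟩
    show β * lam * x + (β * t + tE j0) ∈ E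
    have heq : β * lam * x + (β * t + tE j0) = ψ j0 (lam * x + t) := by
      rw [hψ]; ring
    rw [heq]
    exact hψE j0 ⟨lam * x + t, h2, rfl⟩
  -- separation constant
  have hPc : ∀ j, IsCompact (ψ j '' E) := by
    intro j
    have hc : Continuous (ψ j) := by
      have : ψ j = fun x => β * x + tE j := funext (hψ j)
      rw [this]; fun_prop
    exact hEc.image hc
  have hsep : ∃ δ > 0, ∀ i j : Fin m, i ≠ j → ∀ x ∈ ψ i '' E, ∀ y ∈ ψ j '' E, δ ≤ dist x y := by
    have hp : ∀ p : Fin m × Fin m, ∃ d : ℝ, 0 < d ∧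
        (p.1 ≠ p.2 → ∀ x ∈ ψ p.1 '' E, ∀ y ∈ ψ p.2 '' E, d ≤ dist x y) := by
      rintro ⟨i, j⟩
      by_cases h : i ≠ j
      · obtain ⟨r, hr, hlt⟩ := EMetric.exists_pos_forall_lt_edist (hPc i) (hPc j).isClosed (hSSC h)
        refine ⟨r, hr, fun _ x hx y hy => ?_⟩
        have h2 := hlt x hx y hy
        by_contra hcon
        push_neg at hcon
        have : edist x y < (r : ℝ≥0∞) := by
          rw [edist_dist, ← ENNReal.ofReal_coe_nnreal]
          exact ENNReal.ofReal_lt_ofReal_iff (by exact_mod_cast hr) |>.2 hcon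
        exact absurd h2 (not_lt.2 this.le)
      · exact ⟨1, one_pos, fun hij => absurd hij (by simpa using h)⟩
    choose d hd0 hdsep using hp
    haveI : Nonempty (Fin m) := ⟨⟨0, by omega⟩⟩
    refine ⟨Finset.univ.inf' Finset.univ_nonempty d, ?_, ?_⟩
    · show (0:ℝ) < _
      rw [Finset.lt_inf'_iff]
      exact fun p _ => hd0 p
    · intro i j hij x hx y hy
      exact le_trans (Finset.inf'_le d (Finset.mem_univ (i, j))) (hdsep (i, j) hij x hx y hy)
  obtain ⟨δ, hδ0, hδ⟩ := hsep
  set ρ : ℝ := δ / Metric.diam F with hρdef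
  have hρ0 : 0 < ρ := div_pos hδ0 hFd
  have zoom : ∀ lam, 0 < lam → lam < ρ → Good lam → Good (lam / β) := by
    rintro lam hlam0 hlamρ ⟨t, ht⟩
    obtain ⟨x0, hx0⟩ := hFne
    have hy0 : lam * x0 + t ∈ E := ht ⟨x0, hx0, rfl⟩
    rw [hE] at hy0
    obtain ⟨j0, hj0⟩ := mem_iUnion.1 hy0
    have key : ∀ x ∈ F, lam * x + t ∈ ψ j0 '' E := by
      intro x hx
      have hxe : lam * x + t ∈ E := ht ⟨x, hx, rfl⟩
      rw [hE] at hxe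
      obtain ⟨j, hj⟩ := mem_iUnion.1 hxe
      by_cases hjj : j = j0
      · rwa [hjj] at hj
      · exfalso
        have hd := hδ j j0 hjj _ hj _ hj0
        have hdist : dist (lam * x + t) (lam * x0 + t) = lam * |x - x0| := by
          rw [Real.dist_eq, show lam * x + t - (lam * x0 + t) = lam * (x - x0) by ring,
            abs_mul, abs_of_pos hlam0]
        have hdiam : |x - x0| ≤ Metric.diam F := by
          rw [← Real.dist_eq]
          exact Metric.dist_le_diam_of_mem hFc.isBounded hx hx0
        have : dist (lam * x + t) (lam * x0 + t) < δ := by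
          rw [hdist]
          calc lam * |x - x0| ≤ lam * Metric.diam F :=
                mul_le_mul_of_nonneg_left hdiam hlam0.le
            _ < ρ * Metric.diam F := by
                exact mul_lt_mul_of_pos_right hlamρ hFd
            _ = δ := by rw [hρdef]; field_simp
        linarith [hd]
    refine ⟨(t - tE j0) / β, ?_⟩
    rintro _ ⟨x, hx, rfl⟩
    obtain ⟨z, hz, hze⟩ := key x hx
    rw [hψ] at hze
    show lam / β * x + (t - tE j0) / β ∈ E
    have : lam / β * x + (t - tE j0) / β = z := by
      field_simp
      linarith [hze]
    rw [this]; exact hz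
  have hβne : β ≠ 0 := ne_of_gt hβ0
  have hdiv : ∀ n : ℕ, ∀ lam, 0 < lam → Good lam → lam / β ^ n < ρ → Good (lam / β ^ n) := by
    intro n
    induction n with
    | zero => intro lam h0 hg _; simpa using hg
    | succ n ih =>
      intro lam h0 hg hlt
      have hpow : (0:ℝ) < β ^ n := pow_pos hβ0 n
      have hpow1 : (0:ℝ) < β ^ (n+1) := pow_pos hβ0 (n+1)
      have hmono : lam / β ^ n < lam / β ^ (n+1) := by
        rw [div_lt_div_iff_of_pos_left h0 hpow hpow1]
        calc β ^ (n+1) = β ^ n * β := by rw [pow_succ]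
          _ < β ^ n * 1 := by exact mul_lt_mul_of_pos_left hβ1 hpow
          _ = β ^ n := by ring
      have h1 : lam / β ^ n < ρ := lt_trans hmono hlt
      have IH := ih lam h0 hg h1
      have := zoom (lam / β ^ n) (div_pos h0 hpow) h1 IH
      have heq : lam / β ^ n / β = lam / β ^ (n+1) := by
        rw [div_div, ← pow_succ]
      rwa [heq] at this
  have good_gamma : Good γ := ⟨b, hg⟩
  have goodscale : ∀ i j : ℕ, Good (β ^ j * (α ^ i * γ)) := by
    intro i
    have hi : Good (α ^ i * γ) := by
      induction i with
      | zero => simpa using good_gamma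
      | succ i ih =>
        have := good_alpha _ ih
        have heq : α ^ (i+1) * γ = α * (α ^ i * γ) := by ring
        rwa [heq]
    intro j
    induction j with
    | zero => simpa using hi
    | succ j ih =>
      have := good_beta _ ih
      have heq : β ^ (j+1) * (α ^ i * γ) = β * (β ^ j * (α ^ i * γ)) := by ring
      rwa [heq]
  have goodZ : ∀ (i : ℕ) (k : ℤ), γ * α ^ i * β ^ k < ρ → Good (γ * α ^ i * β ^ k) := by
    intro i k hlt
    set n : ℕ := (-k).toNat with hn
    have hkn : (0:ℤ) ≤ k + n := by omega
    set jN : ℕ := (k + n).toNat with hjN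
    have hjNk : (jN : ℤ) = k + n := Int.toNat_of_nonneg hkn
    have hμeq : β ^ jN * (α ^ i * γ) = (γ * α ^ i * β ^ k) * β ^ n := by
      have h1 : (β : ℝ) ^ jN = β ^ ((jN : ℤ)) := by
        rw [zpow_natCast]
      rw [h1, hjNk, zpow_add₀ hβne]
      rw [show ((n:ℤ)) = ((n:ℕ) : ℤ) from rfl, zpow_natCast]
      ring
    have hzpow : (0:ℝ) < β ^ k := zpow_pos hβ0 k
    have hval : γ * α ^ i * β ^ k = (β ^ jN * (α ^ i * γ)) / β ^ n := by
      rw [hμeq]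
      field_simp
    rw [hval]
    apply hdiv n _ (by rw [hμeq]; positivity) (goodscale i jN)
    rw [← hval]
    exact hlt
  -- choose p with β^p * γ < ρ
  obtain ⟨p, hp⟩ : ∃ p : ℕ, β ^ p * γ < ρ := by
    obtain ⟨p, hp⟩ := exists_pow_lt_of_lt_one (div_pos hρ0 hγ) hβ1
    exact ⟨p, by rwa [← lt_div_iff₀ hγ]⟩
  refine ⟨p, ?_⟩
  set l : ℝ := β ^ (p + 1) * γ with hldef
  set u : ℝ := β ^ p * γ with hudef
  set A : Set (ℝ × ℝ) := {q : ℝ × ℝ | 0 < q.1 ∧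
      q.1 ∈ Set.Icc (β ^ (p + 1) * γ) (β ^ p * γ) ∧
      (fun x => q.1 * x + q.2) '' F ⊆ E} with hAdef
  have hl0 : 0 < l := by positivity
  have hlu : l < u := by
    rw [hldef, hudef]
    have h1 : β ^ (p+1) < β ^ p := by
      calc β ^ (p+1) = β ^ p * β := by rw [pow_succ]
        _ < β ^ p * 1 := by exact mul_lt_mul_of_pos_left hβ1 (pow_pos hβ0 p)
        _ = β ^ p := by ring
    exact mul_lt_mul_of_pos_right h1 hγ
  obtain ⟨x0, hx0⟩ := hFne
  obtain ⟨R, hR⟩ := hEc.isBounded.subset_closedBall 0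
  have hbdd : Bornology.IsBounded A := by
    apply Bornology.IsBounded.subset
      (Bornology.IsBounded.prod (Metric.isBounded_Icc l u)
        (Metric.isBounded_closedBall (x := (0:ℝ)) (r := R + u * |x0|)))
    rintro ⟨η, t⟩ ⟨hq0, hqI, hqE⟩
    refine ⟨hqI, ?_⟩
    have hy : η * x0 + t ∈ E := hqE ⟨x0, hx0, rfl⟩
    have hyR := hR hy
    rw [Metric.mem_closedBall, Real.dist_eq, sub_zero] at hyR ⊢
    have h1 : |t| ≤ |η * x0 + t| + |η * x0| := by
      have := abs_sub_abs_le_abs_sub t (-(η * x0))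
      rw [abs_neg, sub_neg_eq_add, add_comm] at this
      linarith [abs_nonneg (η*x0), abs_add_le t (η*x0)]
    have h2 : |η * x0| ≤ u * |x0| := by
      rw [abs_mul, abs_of_pos hq0]
      exact mul_le_mul_of_nonneg_right hqI.2 (abs_nonneg x0)
    linarith
  have hcomp : IsCompact (closure A) := hbdd.isCompact_closure
  have hIccProj : Set.Icc l u ⊆ Prod.fst '' closure A := by
    have hproj_closed : IsClosed (Prod.fst '' closure A) :=
      (hcomp.image continuous_fst).isClosed
    have hIoo : Ioo l u ⊆ closure (Prod.fst '' A) := by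
      intro η hη
      rw [Metric.mem_closure_iff]
      intro ε hε
      set ε' : ℝ := min ε (min (η - l) (u - η)) with hε'def
      have hε'0 : 0 < ε' := by
        rcases hη with ⟨h1, h2⟩
        exact lt_min hε (lt_min (by linarith) (by linarith))
      have hη0 : 0 < η := lt_trans hl0 hη.1
      have hηε : 0 < η - ε' := by
        have := min_le_right ε (min (η - l) (u - η))
        have := min_le_left (η - l) (u - η)
        have h3 : ε' ≤ η - l := le_trans (min_le_right _ _) (min_le_left _ _)
        linarith [hl0]
      have hb' : Real.log β < 0 := Real.log_neg hβ0 hβ1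
      set ε'' : ℝ := min (Real.log η - Real.log (η - ε'))
        (Real.log (η + ε') - Real.log η) with hε''def
      have hε''0 : 0 < ε'' := by
        apply lt_min
        · have := (Real.log_lt_log_iff hηε hη0).2 (by linarith)
          linarith
        · have := (Real.log_lt_log_iff hη0 (by linarith : (0:ℝ) < η + ε')).2 (by linarith)
          linarith
      obtain ⟨mm, k, hmk⟩ := denseNk hb' hirr (Real.log η - Real.log γ) ε'' hε''0
      set lam : ℝ := γ * α ^ mm * β ^ k with hlamdef
      have hlam0 : 0 < lam := by positivity
      have hloglam : Real.log lam =
          Real.log γ + (mm : ℝ) * Real.log α + (k : ℝ) * Real.log β := by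
        rw [hlamdef, Real.log_mul (by positivity) (by positivity),
          Real.log_mul (by positivity) (by positivity), Real.log_pow, Real.log_zpow]
      have hclose : |Real.log lam - Real.log η| < ε'' := by
        rw [hloglam]
        have : Real.log γ + (mm : ℝ) * Real.log α + (k : ℝ) * Real.log β - Real.log η
            = (mm : ℝ) * Real.log α + (k : ℝ) * Real.log β
              - (Real.log η - Real.log γ) := by ring
        rw [this]
        exact hmk
      have hlow : η - ε' < lam := by
        rw [← Real.log_lt_log_iff hηε hlam0]
        have h3 := min_le_left (Real.log η - Real.log (η - ε'))
          (Real.log (η + ε') - Real.log η)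
        rw [abs_lt] at hclose
        rw [← hε''def] at h3
        linarith [hclose.1]
      have hhigh : lam < η + ε' := by
        rw [← Real.log_lt_log_iff hlam0 (by linarith : (0:ℝ) < η + ε')]
        have h3 := min_le_right (Real.log η - Real.log (η - ε'))
          (Real.log (η + ε') - Real.log η)
        rw [abs_lt] at hclose
        rw [← hε''def] at h3
        linarith [hclose.2]
      have hε'l : ε' ≤ η - l := le_trans (min_le_right _ _) (min_le_left _ _)
      have hε'u : ε' ≤ u - η := le_trans (min_le_right _ _) (min_le_right _ _)
      have hlaml : l < lam := by linarith
      have hlamu : lam < u := by linarith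
      have hlamρ : lam < ρ := by rw [hudef] at hlamu; linarith
      obtain ⟨t, ht⟩ := goodZ mm k (by rw [← hlamdef]; exact hlamρ)
      refine ⟨lam, ⟨(lam, t), ⟨hlam0, ⟨le_of_lt hlaml, le_of_lt hlamu⟩, ht⟩, rfl⟩, ?_⟩
      rw [Real.dist_eq, abs_lt]
      constructor
      · have := min_le_left ε (min (η - l) (u - η))
        linarith
      · have := min_le_left ε (min (η - l) (u - η))
        linarith
    have h2 : closure (Prod.fst '' A) ⊆ Prod.fst '' closure A :=
      closure_minimal (image_mono subset_closure) hproj_closed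
    intro η hη
    have h3 : η ∈ closure (Ioo l u) := by
      rw [closure_Ioo (ne_of_lt hlu)]
      exact hη
    have h4 := closure_mono hIoo h3
    rw [closure_closure] at h4
    exact h2 h4
  refine ⟨hcomp, hIccProj, ?_⟩
  · have hdim1 : dimH (Set.Icc l u : Set ℝ) = 1 := by
      rw [Real.dimH_of_nonempty_interior (by rw [interior_Icc]; exact nonempty_Ioo.2 hlu)]
      simp
    calc (1:ℝ≥0∞) = dimH (Set.Icc l u : Set ℝ) := hdim1.symm
      _ ≤ dimH (Prod.fst '' closure A) := dimH_mono hIccProj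
      _ ≤ dimH (closure A) := LipschitzWith.dimH_image_le LipschitzWith.prod_fst _
end
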